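/- Let g ∈ ℝ and let W̃ : ℝ → ℝ be any differentiable function. On the domain {(T₁,T₂,T₄,T₅) ∈ ℝ⁴ : T₅ < 0}, define ζ = (125·T₁T₅³ − 100·T₂T₄T₅² + 16·T₄⁴) · (−T₅)^{−16/5} and F(T₁,T₂,T₄,T₅) = −(g²/15)·log(−T₅) − (1/5)·T₁T₂²/T₅ + (4/75)·T₂³T₄/T₅² − (2/25)·T₄²T₁²/T₅² + (16/125)·T₄³T₁T₂/T₅³ − (32/625)·T₄⁴T₂²/T₅⁴ − (128/9375)·T₄⁶T₁/T₅⁵ + (512/46875)·T₄⁷T₂/T₅⁶ − (4096/5859375)·T₄¹⁰/T₅⁸ + W̃(ζ). Then F satisfies all three reduced constraints of the (3,2) Generalized Kontsevich Model: (4/3)·T₂³ + 2·T₁²T₄ + 10·T₂T₅·∂F/∂T₁ + 8·T₄²·∂F/∂T₂ + (25/2)·T₅²·∂F/∂T₄ = 0; 2·T₁T₂ + 4·T₄·∂F/∂T₁ + 5·T₅·∂F/∂T₂ = 0; and g²/3 + T₁·∂F/∂T₁ + 2·T₂·∂F/∂T₂ + 4·T₄·∂F/∂T₄ + 5·T₅·∂F/∂T₅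 = 0. -/

import Mathlib

/-!
Split `F = F₀ + W̃ ∘ ζ`, where `F₀` collects the logarithmic and rational terms. Each reduced
constraint is an inhomogeneous first-order linear PDE `c + V F = 0` for a vector field `V` on the
space of times. The function `F₀` is a particular solution of all three, and `ζ` is a joint
invariant of the three vector fields, so by the chain rule `V (W̃ ∘ ζ) = W̃'(ζ) · V ζ = 0`.
-/

open Real

/-- The scaling-invariant combination of the times of the (3,2) Generalized
Kontsevich Model:
`ζ = (125·T₁T₅³ − 100·T₂T₄T₅² + 16·T₄⁴)·(−T₅)^{−16/5}`. -/
noncomputable def zeta32 (T₁ T₂ T₄ T₅ : ℝ) : ℝ :=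
  (125 * T₁ * T₅ ^ 3 - 100 * T₂ * T₄ * T₅ ^ 2 + 16 * T₄ ^ 4) * (-T₅) ^ (-(16 : ℝ) / 5)

/-- The general solution of the reduced constraints of the (3,2) Generalized
Kontsevich Model, with `W̃` an arbitrary function of one variable. -/
noncomputable def gkm32F (g : ℝ) (Wt : ℝ → ℝ) (T₁ T₂ T₄ T₅ : ℝ) : ℝ :=
  -(g ^ 2 / 15) * Real.log (-T₅) - (1 / 5) * T₁ * T₂ ^ 2 / T₅ +
    (4 / 75) * T₂ ^ 3 * T₄ / T₅ ^ 2 - (2 / 25) * T₄ ^ 2 * T₁ ^ 2 / T₅ ^ 2 +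
    (16 / 125) * T₄ ^ 3 * T₁ * T₂ / T₅ ^ 3 - (32 / 625) * T₄ ^ 4 * T₂ ^ 2 / T₅ ^ 4 -
    (128 / 9375) * T₄ ^ 6 * T₁ / T₅ ^ 5 + (512 / 46875) * T₄ ^ 7 * T₂ / T₅ ^ 6 -
    (4096 / 5859375) * T₄ ^ 10 / T₅ ^ 8 + Wt (zeta32 T₁ T₂ T₄ T₅)

theorem deriv_add_comp {𝕜 : Type*} [NontriviallyNormedField 𝕜] {f z W : 𝕜 → 𝕜} {x : 𝕜}
    (hf : DifferentiableAt 𝕜 f x) (hz : DifferentiableAt 𝕜 z x)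
    (hW : DifferentiableAt 𝕜 W (z x)) :
    deriv (fun t => f t + W (z t)) x = deriv f x + deriv W (z x) * deriv z x := by
  rw [← deriv_comp x hW hz]
  exact deriv_fun_add hf (hW.comp x hz)

noncomputable def gkm32F₀ (g T₁ T₂ T₄ T₅ : ℝ) : ℝ :=
  -(g ^ 2 / 15) * Real.log (-T₅) - (1 / 5) * T₁ * T₂ ^ 2 / T₅ +
    (4 / 75) * T₂ ^ 3 * T₄ / T₅ ^ 2 - (2 / 25) * T₄ ^ 2 * T₁ ^ 2 / T₅ ^ 2 +
    (16 / 125) * T₄ ^ 3 * T₁ * T₂ / T₅ ^ 3 - (32 / 625) * T₄ ^ 4 * T₂ ^ 2 / T₅ ^ 4 -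
    (128 / 9375) * T₄ ^ 6 * T₁ / T₅ ^ 5 + (512 / 46875) * T₄ ^ 7 * T₂ / T₅ ^ 6 -
    (4096 / 5859375) * T₄ ^ 10 / T₅ ^ 8

-- The first-order parts of the reduced `W⁽³⁾₋₂`, `L₋₁` and `L₀` constraints; the last is the
-- Euler field of the grading `deg Tₖ = k`, of which `ζ` has degree `0`.
noncomputable def vecFieldW (F : ℝ → ℝ → ℝ → ℝ → ℝ) (T₁ T₂ T₄ T₅ : ℝ) : ℝ :=
  10 * T₂ * T₅ * deriv (fun t => F t T₂ T₄ T₅) T₁ +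
    8 * T₄ ^ 2 * deriv (fun t => F T₁ t T₄ T₅) T₂ +
    (25 / 2) * T₅ ^ 2 * deriv (fun t => F T₁ T₂ t T₅) T₄

noncomputable def vecFieldLm1 (F : ℝ → ℝ → ℝ → ℝ → ℝ) (T₁ T₂ T₄ T₅ : ℝ) : ℝ :=
  4 * T₄ * deriv (fun t => F t T₂ T₄ T₅) T₁ + 5 * T₅ * deriv (fun t => F T₁ t T₄ T₅) T₂

noncomputable def vecFieldL0 (F : ℝ → ℝ → ℝ → ℝ → ℝ) (T₁ T₂ T₄ T₅ : ℝ) : ℝ :=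
  T₁ * deriv (fun t => F t T₂ T₄ T₅) T₁ + 2 * T₂ * deriv (fun t => F T₁ t T₄ T₅) T₂ +
    4 * T₄ * deriv (fun t => F T₁ T₂ t T₅) T₄ + 5 * T₅ * deriv (fun t => F T₁ T₂ T₄ t) T₅

section

variable (g T₁ T₂ T₄ T₅ : ℝ)

theorem deriv_zeta32_T₁ :
    deriv (fun t => zeta32 t T₂ T₄ T₅) T₁ = 125 * T₅ ^ 3 * (-T₅) ^ (-(16 : ℝ) / 5) := by
  simp [zeta32]

theorem deriv_zeta32_T₂ :
    deriv (fun t => zeta32 T₁ t T₄ T₅) T₂ = -100 * T₄ * T₅ ^ 2 * (-T₅) ^ (-(16 : ℝ) / 5) := by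
  simp [zeta32]

theorem deriv_zeta32_T₄ :
    deriv (fun t => zeta32 T₁ T₂ t T₅) T₄ =
      (64 * T₄ ^ 3 - 100 * T₂ * T₅ ^ 2) * (-T₅) ^ (-(16 : ℝ) / 5) := by
  simp only [zeta32]
  rw [deriv_mul_const (by fun_prop)]
  congr 1
  simp (disch := fun_prop) only [deriv_fun_add, deriv_fun_sub, deriv_fun_mul, deriv_const',
    deriv_const_mul_id', deriv_fun_pow, deriv_id'', Nat.cast_ofNat, Nat.add_one_sub_one]
  ring

theorem deriv_zeta32_T₅ (hT₅ : T₅ ≠ 0) :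
    deriv (fun t => zeta32 T₁ T₂ T₄ t) T₅ =
      (375 * T₁ * T₅ ^ 2 - 200 * T₂ * T₄ * T₅) * (-T₅) ^ (-(16 : ℝ) / 5) -
        16 / (5 * T₅) * zeta32 T₁ T₂ T₄ T₅ := by
  have hne : -T₅ ≠ 0 := neg_ne_zero.mpr hT₅
  have hpow := ((hasDerivAt_neg T₅).rpow_const (p := -(16 : ℝ) / 5) (Or.inl hne)).deriv
  simp (disch := fun_prop (disch := assumption)) only [zeta32, deriv_fun_mul, deriv_fun_add,
    deriv_fun_sub, deriv_const', deriv_fun_pow, deriv_id'', Nat.cast_ofNat, Nat.add_one_sub_one,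
    hpow, Real.rpow_sub_one hne]
  field_simp
  ring

theorem vecFieldW_zeta32 : vecFieldW zeta32 T₁ T₂ T₄ T₅ = 0 := by
  simp only [vecFieldW, deriv_zeta32_T₁, deriv_zeta32_T₂, deriv_zeta32_T₄]
  ring

theorem vecFieldLm1_zeta32 : vecFieldLm1 zeta32 T₁ T₂ T₄ T₅ = 0 := by
  simp only [vecFieldLm1, deriv_zeta32_T₁, deriv_zeta32_T₂]
  ring

theorem vecFieldL0_zeta32 (hT₅ : T₅ ≠ 0) : vecFieldL0 zeta32 T₁ T₂ T₄ T₅ = 0 := by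
  rw [vecFieldL0, deriv_zeta32_T₁, deriv_zeta32_T₂, deriv_zeta32_T₄,
    deriv_zeta32_T₅ T₁ T₂ T₄ T₅ hT₅, zeta32]
  field_simp
  ring

theorem vecFieldW_gkm32F₀ (hT₅ : T₅ ≠ 0) :
    vecFieldW (gkm32F₀ g) T₁ T₂ T₄ T₅ = -((4 / 3) * T₂ ^ 3 + 2 * T₁ ^ 2 * T₄) := by
  simp (disch := fun_prop) only [vecFieldW, gkm32F₀, deriv_fun_add, deriv_fun_sub, deriv_fun_mul,
    deriv_const', deriv_const_mul_id', deriv_div_const, deriv_fun_pow, deriv_id'', Nat.cast_ofNat,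
    Nat.add_one_sub_one]
  field_simp
  ring

theorem vecFieldLm1_gkm32F₀ (hT₅ : T₅ ≠ 0) :
    vecFieldLm1 (gkm32F₀ g) T₁ T₂ T₄ T₅ = -(2 * T₁ * T₂) := by
  simp (disch := fun_prop) only [vecFieldLm1, gkm32F₀, deriv_fun_add, deriv_fun_sub, deriv_fun_mul,
    deriv_const', deriv_const_mul_id', deriv_div_const, deriv_fun_pow, deriv_id'', Nat.cast_ofNat,
    Nat.add_one_sub_one]
  field_simp
  ring

theorem vecFieldL0_gkm32F₀ (hT₅ : T₅ ≠ 0) :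
    vecFieldL0 (gkm32F₀ g) T₁ T₂ T₄ T₅ = -(g ^ 2 / 3) := by
  simp (disch := first | fun_prop (disch := simp [hT₅]) | simp [hT₅]) only [vecFieldL0, gkm32F₀,
    deriv_fun_add, deriv_fun_sub, deriv_fun_mul, deriv_const', deriv_const_mul_id', deriv_div_const,
    deriv_fun_div, deriv_const_div_id, deriv_fun_pow, deriv_id'', Nat.cast_ofNat,
    Nat.add_one_sub_one, log_neg_eq_log, deriv_log']
  field_simp
  ring

variable {Wt : ℝ → ℝ} (hWt : DifferentiableAt ℝ Wt (zeta32 T₁ T₂ T₄ T₅))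
include hWt

theorem deriv_gkm32F_T₁ :
    deriv (fun t => gkm32F g Wt t T₂ T₄ T₅) T₁ =
      deriv (fun t => gkm32F₀ g t T₂ T₄ T₅) T₁ +
        deriv Wt (zeta32 T₁ T₂ T₄ T₅) * deriv (fun t => zeta32 t T₂ T₄ T₅) T₁ :=
  deriv_add_comp (f := fun t => gkm32F₀ g t T₂ T₄ T₅) (z := fun t => zeta32 t T₂ T₄ T₅)
    (by unfold gkm32F₀; fun_prop) (by unfold zeta32; fun_prop) hWt

theorem deriv_gkm32F_T₂ :
    deriv (fun t => gkm32F g Wt T₁ t T₄ T₅) T₂ =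
      deriv (fun t => gkm32F₀ g T₁ t T₄ T₅) T₂ +
        deriv Wt (zeta32 T₁ T₂ T₄ T₅) * deriv (fun t => zeta32 T₁ t T₄ T₅) T₂ :=
  deriv_add_comp (f := fun t => gkm32F₀ g T₁ t T₄ T₅) (z := fun t => zeta32 T₁ t T₄ T₅)
    (by unfold gkm32F₀; fun_prop) (by unfold zeta32; fun_prop) hWt

theorem deriv_gkm32F_T₄ :
    deriv (fun t => gkm32F g Wt T₁ T₂ t T₅) T₄ =
      deriv (fun t => gkm32F₀ g T₁ T₂ t T₅) T₄ +
        deriv Wt (zeta32 T₁ T₂ T₄ T₅) * deriv (fun t => zeta32 T₁ T₂ t T₅) T₄ :=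
  deriv_add_comp (f := fun t => gkm32F₀ g T₁ T₂ t T₅) (z := fun t => zeta32 T₁ T₂ t T₅)
    (by unfold gkm32F₀; fun_prop) (by unfold zeta32; fun_prop) hWt

theorem deriv_gkm32F_T₅ (hT₅ : T₅ ≠ 0) :
    deriv (fun t => gkm32F g Wt T₁ T₂ T₄ t) T₅ =
      deriv (fun t => gkm32F₀ g T₁ T₂ T₄ t) T₅ +
        deriv Wt (zeta32 T₁ T₂ T₄ T₅) * deriv (fun t => zeta32 T₁ T₂ T₄ t) T₅ :=
  deriv_add_comp (f := fun t => gkm32F₀ g T₁ T₂ T₄ t) (z := fun t => zeta32 T₁ T₂ T₄ t)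
    (by unfold gkm32F₀; fun_prop (disch := simp [hT₅]))
    (by unfold zeta32; fun_prop (disch := simp [hT₅])) hWt

end

/-- For any differentiable `W̃ : ℝ → ℝ`, the function `gkm32F` satisfies all
three reduced constraints (`W⁽³⁾₋₂`, `L₋₁` and `L₀`) of the (3,2) Generalized
Kontsevich Model on the domain `T₅ < 0`. -/
theorem gkm32F_satisfies_reduced_constraints
    (g : ℝ) (Wt : ℝ → ℝ) (hWt : Differentiable ℝ Wt)
    (T₁ T₂ T₄ T₅ : ℝ) (hT₅ : T₅ < 0) :
    (4 / 3) * T₂ ^ 3 + 2 * T₁ ^ 2 * T₄ +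
        10 * T₂ * T₅ * deriv (fun t => gkm32F g Wt t T₂ T₄ T₅) T₁ +
        8 * T₄ ^ 2 * deriv (fun t => gkm32F g Wt T₁ t T₄ T₅) T₂ +
        (25 / 2) * T₅ ^ 2 * deriv (fun t => gkm32F g Wt T₁ T₂ t T₅) T₄ = 0 ∧
    2 * T₁ * T₂ + 4 * T₄ * deriv (fun t => gkm32F g Wt t T₂ T₄ T₅) T₁ +
        5 * T₅ * deriv (fun t => gkm32F g Wt T₁ t T₄ T₅) T₂ = 0 ∧
    g ^ 2 / 3 + T₁ * deriv (fun t => gkm32F g Wt t T₂ T₄ T₅) T₁ +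
        2 * T₂ * deriv (fun t => gkm32F g Wt T₁ t T₄ T₅) T₂ +
        4 * T₄ * deriv (fun t => gkm32F g Wt T₁ T₂ t T₅) T₄ +
        5 * T₅ * deriv (fun t => gkm32F g Wt T₁ T₂ T₄ t) T₅ = 0 := by
  have hT₅' : T₅ ≠ 0 := hT₅.ne
  have hW₀ := vecFieldW_gkm32F₀ g T₁ T₂ T₄ T₅ hT₅'
  have hLm1₀ := vecFieldLm1_gkm32F₀ g T₁ T₂ T₄ T₅ hT₅'
  have hL0₀ := vecFieldL0_gkm32F₀ g T₁ T₂ T₄ T₅ hT₅'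
  have hWζ := vecFieldW_zeta32 T₁ T₂ T₄ T₅
  have hLm1ζ := vecFieldLm1_zeta32 T₁ T₂ T₄ T₅
  have hL0ζ := vecFieldL0_zeta32 T₁ T₂ T₄ T₅ hT₅'
  rw [vecFieldW] at hW₀ hWζ
  rw [vecFieldLm1] at hLm1₀ hLm1ζ
  rw [vecFieldL0] at hL0₀ hL0ζ
  have hWt' := hWt (zeta32 T₁ T₂ T₄ T₅)
  rw [deriv_gkm32F_T₁ g T₁ T₂ T₄ T₅ hWt', deriv_gkm32F_T₂ g T₁ T₂ T₄ T₅ hWt',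
    deriv_gkm32F_T₄ g T₁ T₂ T₄ T₅ hWt', deriv_gkm32F_T₅ g T₁ T₂ T₄ T₅ hWt' hT₅']
  set w := deriv Wt (zeta32 T₁ T₂ T₄ T₅)
  exact ⟨by linear_combination hW₀ + w * hWζ, by linear_combination hLm1₀ + w * hLm1ζ,
    by linear_combination hL0₀ + w * hL0ζ⟩
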